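/- arXiv:1501.04579 — 5 statements merged into one kernel-verified Lean document; each statement's English description precedes it below -/
import Mathlib

section
/- The influence difference function is not in general submodular: there is a directed graph on four vertices {u, v, x, y} with edges (u,v), (v,x), (x,y), where σ⁺ counts vertices reachable using all three edges and σ⁻ counts vertices reachable using only edges (v,x) and (x,y), such that for S = {u}, T = {u,x}, and element v, we have δ(S ∪ {v}) − δ(S) < δ(T ∪ {v}) − δ(T), where δ = σ⁺ − σ⁻ (as integers). -/
/-- Vertices reachable from `S` via directed edges given by relation `E`. -/
def reach {V : Type*} (E : V → V → Prop) (S : Set V) : Set V :=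
  {v | ∃ s ∈ S, Relation.ReflTransGen E s v}

/-- Edges known to be present: (v,x) and (x,y), with u = 0, v = 1, x = 2, y = 3. -/
def Elow : Fin 4 → Fin 4 → Prop := fun a b => (a = 1 ∧ b = 2) ∨ (a = 2 ∧ b = 3)

/-- The uncertain edge (u,v). -/
def Eextra : Fin 4 → Fin 4 → Prop := fun a b => a = 0 ∧ b = 1

/-- Influence difference δ = σ⁺ − σ⁻ for the four-node example. -/
noncomputable def deltaEx (S : Set (Fin 4)) : ℤ :=
  ((reach (fun a b => Elow a b ∨ Eextra a b) S).ncard : ℤ) - ((reach Elow S).ncard : ℤ)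

/-! With the edge (u,v), u reaches every vertex, so σ⁺ = 4 on every set containing u and
δ(S) = 4 − σ⁻(S) there. Without it, u reaches only itself, v reaches {v, x, y} and x reaches
{x, y}: adding v to {u} raises σ⁻ by 3, but adding it to {u, x} raises it only by 1. -/

section Reach

variable {V : Type*} {E : V → V → Prop}

lemma reach_union (S T : Set V) : reach E (S ∪ T) = reach E S ∪ reach E T := by
  ext v
  simp only [reach, Set.mem_union, Set.mem_ofPred_eq, or_and_right, exists_or]

lemma reach_singleton_of_unique_succ {a b : V} (h : ∀ c, E a c ↔ c = b) :
    reach E {a} = insert a (reach E {b}) := by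
  ext v
  simp only [reach, Set.mem_singleton_iff, exists_eq_left, Set.mem_insert_iff,
    Set.mem_ofPred_eq, Relation.ReflTransGen.cases_head_iff (a := a), h]
  simp [eq_comm]

lemma reach_singleton_of_forall_not_rel {a : V} (h : ∀ c, ¬ E a c) : reach E {a} = {a} := by
  ext v
  simp [reach, Relation.ReflTransGen.cases_head_iff (a := a), h, eq_comm]

end Reach

lemma reach_Elow_three : reach Elow {3} = {3} :=
  reach_singleton_of_forall_not_rel (by unfold Elow; decide)

lemma reach_Elow_two : reach Elow {2} = {2, 3} := by
  rw [reach_singleton_of_unique_succ (b := 3) (by unfold Elow; decide), reach_Elow_three]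

lemma reach_Elow_one : reach Elow {1} = {1, 2, 3} := by
  rw [reach_singleton_of_unique_succ (b := 2) (by unfold Elow; decide), reach_Elow_two]

lemma reach_Elow_zero : reach Elow {0} = {0} :=
  reach_singleton_of_forall_not_rel (by unfold Elow; decide)

lemma reach_Elow_or_Eextra_zero : reach (fun a b => Elow a b ∨ Eextra a b) {0} = Set.univ := by
  rw [reach_singleton_of_unique_succ (b := 1) (by unfold Elow Eextra; decide),
    reach_singleton_of_unique_succ (b := 2) (by unfold Elow Eextra; decide),
    reach_singleton_of_unique_succ (b := 3) (by unfold Elow Eextra; decide),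
    reach_singleton_of_forall_not_rel (by unfold Elow Eextra; decide)]
  ext v; fin_cases v <;> simp

lemma deltaEx_of_zero_mem {S : Set (Fin 4)} (h : 0 ∈ S) :
    deltaEx S = 4 - (reach Elow S).ncard := by
  rw [deltaEx, ← Set.insert_eq_of_mem h, Set.insert_eq, reach_union, reach_Elow_or_Eextra_zero]
  simp

lemma deltaEx_zero : deltaEx {0} = 3 := by
  rw [deltaEx_of_zero_mem (Set.mem_singleton 0), reach_Elow_zero, Set.ncard_singleton]; rfl

lemma deltaEx_zero_two : deltaEx {0, 2} = 1 := by
  rw [deltaEx_of_zero_mem (by simp), Set.insert_eq, reach_union, reach_Elow_zero, reach_Elow_two,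
    Set.ncard_eq_toFinset_card']
  rfl

lemma deltaEx_zero_union_one : deltaEx ({0} ∪ {1}) = 0 := by
  rw [deltaEx_of_zero_mem (by simp), reach_union, reach_Elow_zero, reach_Elow_one,
    Set.ncard_eq_toFinset_card']
  rfl

lemma deltaEx_zero_two_union_one : deltaEx ({0, 2} ∪ {1}) = 0 := by
  rw [deltaEx_of_zero_mem (by simp), Set.insert_eq, reach_union, reach_union, reach_Elow_zero,
    reach_Elow_one, reach_Elow_two, Set.ncard_eq_toFinset_card']
  rfl

theorem deltaEx_not_submodular :
    deltaEx ({0} ∪ {1}) - deltaEx {0} < deltaEx ({0, 2} ∪ {1}) - deltaEx {0, 2} := by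
  rw [deltaEx_zero, deltaEx_zero_two, deltaEx_zero_union_one, deltaEx_zero_two_union_one]
  norm_num
end

section
/- In the reduction graph G' built from an undirected graph G (as in the independent-set reduction), for every set S' ⊆ V' ∪ V'' there exists an independent set I in G with |I| ≥ δ(S'), where δ(S') = |reach_{E'∪E''}(S')| − |reach_{E'}(S')|. -/
/-- Edges E' of the reduction graph: (v'_i, v''_j) whenever {v_i, v_j} is an edge of G.
`Sum.inl` is the copy V', `Sum.inr` the copy V''. -/
def E1 {V : Type*} (Adj : V → V → Prop) : (V ⊕ V) → (V ⊕ V) → Prop :=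
  fun a b => ∃ i j, Adj i j ∧ a = Sum.inl i ∧ b = Sum.inr j

/-- Edges E'' of the reduction graph: (v'_i, v''_i) for every vertex v_i of G. -/
def E2 {V : Type*} : (V ⊕ V) → (V ⊕ V) → Prop :=
  fun a b => ∃ i, a = Sum.inl i ∧ b = Sum.inr i

/-- Influence difference δ(S) = |reach_{E'∪E''}(S)| − |reach_{E'}(S)|. -/
noncomputable def delta {V : Type*} [Fintype V] (Adj : V → V → Prop) (S : Set (V ⊕ V)) : ℤ :=
  ((reach (fun a b => E1 Adj a b ∨ E2 a b) S).ncard : ℤ) - ((reach (E1 Adj) S).ncard : ℤ)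

/-!
Every edge of G' goes from V' to V'', so a vertex reachable from S' through E' ∪ E'' is either
in S' or one step away from it. A step that is not already an E'-step from S' is an E''-step
v'_i → v''_i where v'_i ∈ S' and no v'_k ∈ S' is adjacent to v_i. These i form an independent
set I (an edge between two of them would make one an E'-neighbour of the other), and the
E''-steps add at most |I| vertices to reach_{E'}(S').
-/

theorem Relation.reflTransGen_eq_or_of_forall_not_comp {α : Type*} {r : α → α → Prop}
    (hr : ∀ a b c, r a b → ¬ r b c) {a b : α} (h : Relation.ReflTransGen r a b) :
    a = b ∨ r a b := by
  induction h with
  | refl => exact Or.inl rfl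
  | tail _ hbc ih =>
    rcases ih with rfl | hab
    · exact Or.inr hbc
    · exact (hr _ _ _ hab hbc).elim

section ReductionGraph

variable {V : Type*} (Adj : V → V → Prop)

theorem E1_or_E2_not_comp (a b c : V ⊕ V) :
    E1 Adj a b ∨ E2 a b → ¬ (E1 Adj b c ∨ E2 b c) := by
  rintro (⟨i, j, -, -, rfl⟩ | ⟨i, -, rfl⟩) (⟨k, l, -, h, -⟩ | ⟨k, h, -⟩) <;> cases h

def unshadowed (S : Set (V ⊕ V)) : Set V :=
  {i | Sum.inl i ∈ S ∧ ∀ k, Sum.inl k ∈ S → ¬ Adj k i}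

theorem unshadowed_independent (S : Set (V ⊕ V)) :
    ∀ i ∈ unshadowed Adj S, ∀ j ∈ unshadowed Adj S, ¬ Adj i j :=
  fun i hi _ hj => hj.2 i hi.1

theorem reach_E1_or_E2_subset (S : Set (V ⊕ V)) :
    reach (fun a b => E1 Adj a b ∨ E2 a b) S ⊆ reach (E1 Adj) S ∪ Sum.inr '' unshadowed Adj S := by
  rintro v ⟨s, hs, hsv⟩
  rcases Relation.reflTransGen_eq_or_of_forall_not_comp (E1_or_E2_not_comp Adj) hsv with
    rfl | hE1 | ⟨i, rfl, rfl⟩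
  · exact Or.inl ⟨_, hs, .refl⟩
  · exact Or.inl ⟨s, hs, .single hE1⟩
  by_cases hshadow : ∃ k, Sum.inl k ∈ S ∧ Adj k i
  · obtain ⟨k, hk, hki⟩ := hshadow
    exact Or.inl ⟨Sum.inl k, hk, .single ⟨k, i, hki, rfl, rfl⟩⟩
  · push Not at hshadow
    exact Or.inr ⟨i, ⟨hs, hshadow⟩, rfl⟩

end ReductionGraph

theorem independent_ge_delta_general {V : Type*} [Fintype V] (Adj : V → V → Prop)
    (S' : Set (V ⊕ V)) :
    ∃ I : Set V, (∀ i ∈ I, ∀ j ∈ I, ¬ Adj i j) ∧ delta Adj S' ≤ (I.ncard : ℤ) := by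
  refine ⟨unshadowed Adj S', unshadowed_independent Adj S', ?_⟩
  have hcard : (reach (fun a b => E1 Adj a b ∨ E2 a b) S').ncard ≤
      (reach (E1 Adj) S').ncard + (unshadowed Adj S').ncard :=
    calc _ ≤ (reach (E1 Adj) S' ∪ Sum.inr '' unshadowed Adj S').ncard :=
          Set.ncard_le_ncard (reach_E1_or_E2_subset Adj S') (Set.toFinite _)
      _ ≤ (reach (E1 Adj) S').ncard + (Sum.inr '' unshadowed Adj S').ncard :=
          Set.ncard_union_le _ _
      _ = _ := by rw [Set.ncard_image_of_injective _ Sum.inr_injective]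
  unfold delta
  omega

theorem independent_ge_delta {V : Type*} [Fintype V] (Adj : V → V → Prop)
    (hsym : ∀ i j, Adj i j → Adj j i) (S' : Set (V ⊕ V)) :
    ∃ I : Set V, (∀ i ∈ I, ∀ j ∈ I, ¬ Adj i j) ∧ delta Adj S' ≤ (I.ncard : ℤ) :=
  independent_ge_delta_general Adj S'
end

section
/- In the independent-set reduction graph G', removing any vertex of V'' from a seed set S' changes the influence difference δ by at most 1, and in fact δ(S' \ {v''}) ≥ δ(S') − 1 for all v'' ∈ V''; moreover if v'' ∈ reach_{E'}(S' \ {v''}) then δ(S' \ {v''}) ≥ δ(S'). -/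
/-!
A vertex `x` of `V''` is a sink for both edge relations, so adding it to a seed set adds exactly
`x` to each of the two reachable sets. Since `reach_{E'} ⊆ reach_{E'∪E''}`, the first count in
`δ` never grows by more than the second, and the second grows by at most one; hence
`δ(T ∪ {x}) ≤ δ(T) ≤ δ(T ∪ {x}) + 1` for every `T`, which gives all three claims.
-/

lemma reach_mono_rel {α : Type*} {E F : α → α → Prop} (h : E ≤ F) (S : Set α) :
    reach E S ⊆ reach F S :=
  fun _ ⟨s, hs, hsw⟩ => ⟨s, hs, Relation.ReflTransGen.mono h s _ hsw⟩

lemma reach_insert_of_forall_not_rel {α : Type*} (E : α → α → Prop) (S : Set α) {x : α}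
    (hx : ∀ y, ¬ E x y) : reach E (insert x S) = insert x (reach E S) := by
  ext w
  simp only [reach, Set.mem_insert_iff, exists_eq_or_imp, Relation.reflTransGen_iff_eq hx,
    Set.mem_ofPred_eq]

lemma ncard_insert_sub_ncard_insert_le {α : Type*} {A B : Set α} (hA : A.Finite) (hBA : B ⊆ A)
    (x : α) :
    ((insert x A).ncard : ℤ) - (insert x B).ncard ≤ (A.ncard : ℤ) - B.ncard := by
  by_cases hxA : x ∈ A
  · rw [Set.ncard_insert_of_mem hxA]
    have := Set.ncard_le_ncard_insert x B
    omega
  · have hxB : x ∉ B := fun h => hxA (hBA h)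
    rw [Set.ncard_insert_of_notMem hxA hA, Set.ncard_insert_of_notMem hxB (hA.subset hBA)]
    push_cast
    omega

lemma ncard_sub_ncard_le_ncard_insert_sub_ncard_insert {α : Type*} (A B : Set α) (x : α) :
    (A.ncard : ℤ) - B.ncard ≤ (insert x A).ncard - (insert x B).ncard + 1 := by
  have := Set.ncard_le_ncard_insert x A
  have := Set.ncard_insert_le x B
  omega

section Reduction

variable {V : Type*} (Adj : V → V → Prop)

lemma not_E1_inr (v : V) (y : V ⊕ V) : ¬ E1 Adj (Sum.inr v) y := by
  rintro ⟨i, j, -, h, -⟩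
  cases h

lemma not_E1_or_E2_inr (v : V) (y : V ⊕ V) : ¬ (E1 Adj (Sum.inr v) y ∨ E2 (Sum.inr v) y) := by
  rintro (h | ⟨i, h, -⟩)
  · exact not_E1_inr Adj v y h
  · cases h

lemma reach_E1_subset (S : Set (V ⊕ V)) :
    reach (E1 Adj) S ⊆ reach (fun a b => E1 Adj a b ∨ E2 a b) S :=
  reach_mono_rel (fun _ _ => Or.inl) S

variable [Fintype V]

lemma delta_insert_inr_le (T : Set (V ⊕ V)) (v : V) :
    delta Adj (insert (Sum.inr v) T) ≤ delta Adj T := by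
  rw [delta, delta, reach_insert_of_forall_not_rel _ _ (not_E1_or_E2_inr Adj v),
    reach_insert_of_forall_not_rel _ _ (not_E1_inr Adj v)]
  exact ncard_insert_sub_ncard_insert_le (Set.toFinite _) (reach_E1_subset Adj T) _

lemma delta_le_delta_insert_inr_add_one (T : Set (V ⊕ V)) (v : V) :
    delta Adj T ≤ delta Adj (insert (Sum.inr v) T) + 1 := by
  rw [delta, delta, reach_insert_of_forall_not_rel _ _ (not_E1_or_E2_inr Adj v),
    reach_insert_of_forall_not_rel _ _ (not_E1_inr Adj v)]
  exact ncard_sub_ncard_le_ncard_insert_sub_ncard_insert _ _ _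

end Reduction

theorem delta_remove_inr_general {V : Type*} [Fintype V] (Adj : V → V → Prop)
    (S' : Set (V ⊕ V)) (v : V) :
    |delta Adj (S' \ {Sum.inr v}) - delta Adj S'| ≤ 1 ∧
      delta Adj S' - 1 ≤ delta Adj (S' \ {Sum.inr v}) ∧
      (Sum.inr v ∈ reach (E1 Adj) (S' \ {Sum.inr v}) →
        delta Adj S' ≤ delta Adj (S' \ {Sum.inr v})) := by
  by_cases hv : Sum.inr v ∈ S'
  · set T := S' \ {Sum.inr v}
    have hS' : S' = insert (Sum.inr v) T := (Set.insert_sdiff_self_of_mem hv).symm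
    have hle := delta_insert_inr_le Adj T v
    have hge := delta_le_delta_insert_inr_add_one Adj T v
    rw [hS']
    exact ⟨abs_le.mpr ⟨by omega, by omega⟩, by omega, fun _ => hle⟩
  · rw [Set.sdiff_singleton_eq_self hv]
    simp

theorem delta_remove_inr {V : Type*} [Fintype V] (Adj : V → V → Prop)
    (hsym : ∀ i j, Adj i j → Adj j i) (S' : Set (V ⊕ V)) (v : V) :
    |delta Adj (S' \ {Sum.inr v}) - delta Adj S'| ≤ 1 ∧
      delta Adj S' - 1 ≤ delta Adj (S' \ {Sum.inr v}) ∧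
      (Sum.inr v ∈ reach (E1 Adj) (S' \ {Sum.inr v}) →
        delta Adj S' ≤ delta Adj (S' \ {Sum.inr v})) :=
  delta_remove_inr_general Adj S' v
end

section
/- For independent edge percolation on a finite directed graph, the expected influence σ_p(S) = E[|reach(S)|] is submodular as a function of the seed set S: for S ⊆ T and any vertex u, σ_p(T ∪ {u}) − σ_p(T) ≤ σ_p(S ∪ {u}) − σ_p(S). -/
/-- Vertices reachable from `S` using the directed edges in the finite edge set `F`. -/
def reachF {V : Type*} (F : Finset (V × V)) (S : Set V) : Set V :=
  {v | ∃ s ∈ S, Relation.ReflTransGen (fun a b => (a, b) ∈ F) s v}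

/-- Probability that exactly the edges in `F ⊆ E` are retained, when each edge `e ∈ E`
is independently present with probability `p e`. -/
def percWeight {V : Type*} [DecidableEq V] (E : Finset (V × V)) (p : V × V → ℝ)
    (F : Finset (V × V)) : ℝ :=
  (∏ e ∈ F, p e) * ∏ e ∈ E \ F, (1 - p e)

/-- Expected number of vertices reachable from the seed set `S` under independent
edge percolation with edge probabilities `p`. -/
noncomputable def sigma {V : Type*} [Fintype V] [DecidableEq V] (E : Finset (V × V)) (p : V × V → ℝ)
    (S : Set V) : ℝ :=
  ∑ F ∈ E.powerset, percWeight E p F * ((reachF F S).ncard : ℝ)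

/-- Probability that vertex `v` is reachable from the seed set `S` under independent
edge percolation with edge probabilities `p`. -/
noncomputable def probReach {V : Type*} [Fintype V] [DecidableEq V] (E : Finset (V × V)) (p : V × V → ℝ)
    (S : Set V) (v : V) : ℝ :=
  ∑ F ∈ E.powerset, percWeight E p F * Set.indicator (reachF F S) (fun _ => (1 : ℝ)) v

lemma reachF_union {V : Type*} (F : Finset (V × V)) (S T : Set V) :
    reachF F (S ∪ T) = reachF F S ∪ reachF F T := by
  ext v
  simp only [reachF, Set.mem_setOf_eq, Set.mem_union]
  constructor
  · rintro ⟨s, hs | hs, hr⟩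
    · exact Or.inl ⟨s, hs, hr⟩
    · exact Or.inr ⟨s, hs, hr⟩
  · rintro (⟨s, hs, hr⟩ | ⟨s, hs, hr⟩)
    · exact ⟨s, Or.inl hs, hr⟩
    · exact ⟨s, Or.inr hs, hr⟩

lemma reachF_mono {V : Type*} (F : Finset (V × V)) {S T : Set V} (h : S ⊆ T) :
    reachF F S ⊆ reachF F T := by
  rintro v ⟨s, hs, hr⟩
  exact ⟨s, h hs, hr⟩

lemma percWeight_nonneg {V : Type*} [DecidableEq V] (E : Finset (V × V)) (p : V × V → ℝ)
    (hp : ∀ e, 0 ≤ p e ∧ p e ≤ 1) (F : Finset (V × V)) : 0 ≤ percWeight E p F := by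
  apply mul_nonneg
  · exact Finset.prod_nonneg fun e _ => (hp e).1
  · exact Finset.prod_nonneg fun e _ => by linarith [(hp e).2]

theorem sigma_seed_submodular {V : Type*} [Fintype V] [DecidableEq V]
    (E : Finset (V × V)) (p : V × V → ℝ)
    (hp : ∀ e, 0 ≤ p e ∧ p e ≤ 1) (S T : Set V) (u : V) (h : S ⊆ T) :
    sigma E p (T ∪ {u}) - sigma E p T ≤ sigma E p (S ∪ {u}) - sigma E p S := by
  unfold sigma
  rw [← Finset.sum_sub_distrib, ← Finset.sum_sub_distrib]
  apply Finset.sum_le_sum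
  intro F _
  rw [← mul_sub, ← mul_sub]
  apply mul_le_mul_of_nonneg_left _ (percWeight_nonneg E p hp F)
  -- pointwise submodularity
  have key : ∀ A : Set V, ((reachF F (A ∪ {u})).ncard : ℝ) - (reachF F A).ncard
      = ((reachF F {u} \ reachF F A).ncard : ℝ) := by
    intro A
    rw [reachF_union]
    have : reachF F A ∪ reachF F {u} = reachF F A ∪ (reachF F {u} \ reachF F A) := by
      rw [Set.union_diff_self]
    rw [this, Set.ncard_union_eq Set.disjoint_sdiff_right (Set.toFinite _) (Set.toFinite _)]
    push_cast
    ring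
  rw [key T, key S]
  have hsub : reachF F {u} \ reachF F T ⊆ reachF F {u} \ reachF F S :=
    Set.diff_subset_diff_right (reachF_mono F h)
  exact_mod_cast Set.ncard_le_ncard hsub (Set.toFinite _)
end

section
/- Greedy guarantee for monotone submodular maximization: if f is a monotone submodular set function with f(∅) = 0 on a finite ground set, and S_k is obtained by k steps of greedily adding the element with the largest marginal gain, then f(S_k) ≥ (1 − (1 − 1/k)^k) · max_{|T| ≤ k} f(T) ≥ (1 − 1/e) · max_{|T| ≤ k} f(T). -/
lemma submod_sum_bound {V : Type*} [DecidableEq V]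
    (f : Finset V → ℝ)
    (hmono : ∀ A B : Finset V, A ⊆ B → f A ≤ f B)
    (hsub : ∀ A B : Finset V, ∀ u : V, A ⊆ B → u ∉ B →
      f (insert u B) - f B ≤ f (insert u A) - f A) :
    ∀ B A : Finset V, f (A ∪ B) - f A ≤ ∑ u ∈ B, (f (insert u A) - f A) := by
  intro B
  induction B using Finset.induction_on with
  | empty => intro A; simp
  | @insert x B hxB ih =>
    intro A
    rw [Finset.sum_insert hxB]
    have h1 : f (A ∪ insert x B) = f (insert x (A ∪ B)) := by
      congr 1; ext y; simp [or_comm, or_left_comm]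
    by_cases hmem : x ∈ A ∪ B
    · have heq : insert x (A ∪ B) = A ∪ B := Finset.insert_eq_self.mpr hmem
      have h2 := ih A
      have h3 : (0:ℝ) ≤ f (insert x A) - f A := by
        have := hmono A (insert x A) (Finset.subset_insert _ _); linarith
      rw [h1, heq]; linarith
    · have h2 := hsub A (A ∪ B) x Finset.subset_union_left hmem
      have h3 := ih A
      rw [h1]; linarith

theorem greedy_guarantee {V : Type*} [DecidableEq V] [Fintype V]
    (f : Finset V → ℝ) (hempty : f ∅ = 0)
    (hmono : ∀ A B : Finset V, A ⊆ B → f A ≤ f B)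
    (hsub : ∀ A B : Finset V, ∀ u : V, A ⊆ B → u ∉ B →
      f (insert u B) - f B ≤ f (insert u A) - f A)
    (k : ℕ) (hk : 1 ≤ k)
    (S : ℕ → Finset V) (hS0 : S 0 = ∅)
    (hgreedy : ∀ i, ∃ u : V, S (i + 1) = insert u (S i) ∧
      ∀ w : V, f (insert w (S i)) ≤ f (insert u (S i))) :
    ∀ T : Finset V, T.card ≤ k →
      (1 - (1 - 1 / (k : ℝ)) ^ k) * f T ≤ f (S k) ∧
      (1 - 1 / Real.exp 1) * f T ≤ f (S k) := by
  intro T hT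
  have hk1 : (1:ℝ) ≤ (k:ℝ) := by exact_mod_cast hk
  have hk0 : (0:ℝ) < (k:ℝ) := by linarith
  have hfT : 0 ≤ f T := by
    have := hmono ∅ T (Finset.empty_subset T); linarith
  -- key per-step bound
  have key : ∀ i, f T - f (S i) ≤ (k:ℝ) * (f (S (i+1)) - f (S i)) := by
    intro i
    obtain ⟨u, hu, humax⟩ := hgreedy i
    have hg0 : 0 ≤ f (S (i+1)) - f (S i) := by
      have := hmono (S i) (insert u (S i)) (Finset.subset_insert _ _)
      rw [hu]; linarith
    have h1 : f T ≤ f (S i ∪ T) := hmono T _ Finset.subset_union_right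
    have h2 := submod_sum_bound f hmono hsub T (S i)
    have h3 : ∑ w ∈ T, (f (insert w (S i)) - f (S i)) ≤
        T.card • (f (S (i+1)) - f (S i)) :=
      Finset.sum_le_card_nsmul T _ _ (fun w _ => by rw [hu]; linarith [humax w])
    rw [nsmul_eq_mul] at h3
    have hcard : (T.card : ℝ) ≤ (k:ℝ) := by exact_mod_cast hT
    nlinarith [mul_le_mul_of_nonneg_right hcard hg0]
  set r : ℝ := 1 - 1 / (k:ℝ) with hr
  have hr0 : 0 ≤ r := by
    rw [hr]; have : 1 / (k:ℝ) ≤ 1 := by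
      rw [div_le_one hk0]; exact hk1
    linarith
  have main : ∀ i, f T - f (S i) ≤ r ^ i * f T := by
    intro i
    induction i with
    | zero => simp [hS0, hempty]
    | succ n ih =>
      have hkey := key n
      have step : f T - f (S (n+1)) ≤ r * (f T - f (S n)) := by
        have : (k:ℝ) * (f T - f (S (n+1))) ≤ ((k:ℝ) - 1) * (f T - f (S n)) := by
          nlinarith
        rw [hr]
        have hrk : (1 - 1/(k:ℝ)) = ((k:ℝ) - 1) / (k:ℝ) := by
          field_simp
        rw [hrk, div_mul_eq_mul_div, le_div_iff₀ hk0]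
        linarith
      calc f T - f (S (n+1)) ≤ r * (f T - f (S n)) := step
        _ ≤ r * (r ^ n * f T) := mul_le_mul_of_nonneg_left ih hr0
        _ = r ^ (n+1) * f T := by ring
  have h1 : (1 - r ^ k) * f T ≤ f (S k) := by
    have := main k; nlinarith
  refine ⟨h1, ?_⟩
  have hre : r ^ k ≤ 1 / Real.exp 1 := by
    have hx : r ≤ Real.exp (-(1/(k:ℝ))) := by
      have := Real.add_one_le_exp (-(1/(k:ℝ)))
      rw [hr]; linarith
    calc r ^ k ≤ (Real.exp (-(1/(k:ℝ)))) ^ k :=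
          pow_le_pow_left₀ hr0 hx k
      _ = Real.exp (-(1/(k:ℝ)) * k) := by rw [← Real.exp_nat_mul]; ring_nf
      _ = Real.exp (-1) := by
          congr 1; field_simp
      _ = 1 / Real.exp 1 := by rw [Real.exp_neg]; ring
  nlinarith [main k, mul_le_mul_of_nonneg_right hre hfT]
end
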